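/- Let |Ψ⟩ = (1/4) Σ_{i=0}^{15} |i⟩_D |β_{f(i)}⟩|β_{g(i)}⟩|β_{f(i)⊕g(i)}⟩ be an encoding where f, g: {0,...,15} → {0,1,2,3} with i ↦ (f(i), g(i)) a bijection onto {0,1,2,3}², |β_k⟩ the Bell states, and the third index f(i)⊕g(i) the group sum in (ℤ_2)². Then the reduced density matrix of the dealer D together with the first four player qubits (tracing out the last two qubits) has a partial transpose (with respect to D) that is not positive semidefinite; hence this reduced state is entangled across D | {first four qubits}. -/

import Mathlib

open Matrix Kronecker ComplexOrder

/-- The four Bell states on two qubits. -/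
noncomputable def bellv (k : Fin 4) (p : Fin 2 × Fin 2) : ℂ :=
  if p.2 = p.1 + ⟨k.val / 2, by omega⟩ then
    (if k.val % 2 = 1 ∧ p.1 = 1 then -((Real.sqrt 2 : ℂ))⁻¹ else ((Real.sqrt 2 : ℂ))⁻¹)
  else 0

/-- The Klein four-group sum `⊕` on Bell-state labels (bitwise XOR of the two-bit
labels), so that `β_{f⊕g}` carries the product of the Pauli labels of `β_f`, `β_g`. -/
def klein : Fin 4 → Fin 4 → Fin 4 :=
  fun a b => ![![0, 1, 2, 3], ![1, 0, 3, 2], ![2, 3, 0, 1], ![3, 2, 1, 0]] a b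

/-- The [[6,4,2]]-encoded dealer-players state
`|Ψ⟩ = (1/4) Σ_i |i⟩_D |β_{f(i)}⟩|β_{g(i)}⟩|β_{f(i)⊕g(i)}⟩`, the six player qubits
being grouped into three Bell pairs. -/
noncomputable def Ψ6 (f g : Fin 16 → Fin 4)
    (x : Fin 16 × ((Fin 2 × Fin 2) × (Fin 2 × Fin 2) × (Fin 2 × Fin 2))) : ℂ :=
  (1 / 4 : ℂ) * bellv (f x.1) x.2.1 * bellv (g x.1) x.2.2.1 *
    bellv (klein (f x.1) (g x.1)) x.2.2.2

/-- The reduced state of the dealer and the first four player qubits, obtained by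
tracing out the last Bell pair from `|Ψ⟩⟨Ψ|`. -/
noncomputable def ρred (f g : Fin 16 → Fin 4) :
    Matrix (Fin 16 × ((Fin 2 × Fin 2) × (Fin 2 × Fin 2)))
      (Fin 16 × ((Fin 2 × Fin 2) × (Fin 2 × Fin 2))) ℂ :=
  Matrix.of fun x y =>
    ∑ r : Fin 2 × Fin 2,
      Ψ6 f g (x.1, (x.2.1, x.2.2, r)) * star (Ψ6 f g (y.1, (y.2.1, y.2.2, r)))

/-- Partial transpose with respect to the dealer system `D`. -/
def ptD {d p : Type*} (M : Matrix (d × p) (d × p) ℂ) : Matrix (d × p) (d × p) ℂ :=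
  Matrix.of fun x y => M (y.1, x.2) (x.1, y.2)

/-- Separability of a bipartite state: a convex combination of product states. -/
def Separable {d p : Type*} [Fintype d] [Fintype p]
    (ρ : Matrix (d × p) (d × p) ℂ) : Prop :=
  ∃ (n : ℕ) (w : Fin n → ℝ) (A : Fin n → Matrix d d ℂ) (B : Fin n → Matrix p p ℂ),
    (∀ k, 0 ≤ w k) ∧ (∀ k, (A k).PosSemidef) ∧ (∀ k, (B k).PosSemidef) ∧
      ρ = ∑ k, (w k : ℂ) • (A k ⊗ₖ B k)

/-! ### Auxiliary lemmas -/

lemma star_bellv (k : Fin 4) (p : Fin 2 × Fin 2) : star (bellv k p) = bellv k p := by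
  unfold bellv
  split_ifs <;> simp [Complex.star_def, map_inv₀, Complex.conj_ofReal]

lemma sqrt2_inv_sq : ((Real.sqrt 2 : ℂ))⁻¹ * ((Real.sqrt 2 : ℂ))⁻¹ = 1 / 2 := by
  rw [← mul_inv, ← Complex.ofReal_mul, Real.mul_self_sqrt (by norm_num)]
  norm_num

lemma bell_norm (k k' : Fin 4) :
    ∑ r : Fin 2 × Fin 2, bellv k r * bellv k' r = if k = k' then 1 else 0 := by
  have h2 := sqrt2_inv_sq
  fin_cases k <;> fin_cases k' <;>
    (try simp [bellv, Fintype.sum_prod_type, Fin.sum_univ_succ, Fin.ext_iff]) <;>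
    (try ring_nf) <;> (try simp [h2, Fin.ext_iff]) <;> (try ring_nf) <;>
    (try simp [sq, h2, Fin.ext_iff]) <;> (try rw [if_neg (by decide)])

lemma key_swap {α β γ : Type*} [Fintype α] [Fintype β] [Fintype γ]
    (v : α × β → ℂ) (A B : α → β → γ → ℂ) :
    (∑ x : α × β, star (v x) * ∑ y : α × β, (∑ r : γ, A y.1 x.2 r * B x.1 y.2 r) * v y)
      = ∑ r : γ, ∑ d1 : α, ∑ d2 : α,
          (∑ p : β, star (v (d1, p)) * A d2 p r) * (∑ p : β, B d1 p r * v (d2, p)) := by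
  simp only [Fintype.sum_prod_type, Finset.mul_sum, Finset.sum_mul]
  conv_lhs => enter [2, a, 2, b, 2, c]; rw [Finset.sum_comm]
  conv_lhs => enter [2, a, 2, b]; rw [Finset.sum_comm]
  conv_lhs => enter [2, a]; rw [Finset.sum_comm]
  rw [Finset.sum_comm]
  refine Finset.sum_congr rfl fun r _ => Finset.sum_congr rfl fun d1 _ => ?_
  rw [Finset.sum_comm]
  refine Finset.sum_congr rfl fun d2 _ => ?_
  rw [Finset.sum_comm]
  exact Finset.sum_congr rfl fun p1 _ =>
    Finset.sum_congr rfl fun p2 _ => by ring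

lemma sum_pair_mul (h1 h2 : Fin 2 × Fin 2 → ℂ) (c : ℂ) :
    ∑ p : (Fin 2 × Fin 2) × (Fin 2 × Fin 2), h1 p.1 * h2 p.2 * c
      = (∑ q, h1 q) * (∑ q, h2 q) * c := by
  rw [Finset.sum_mul_sum, Fintype.sum_prod_type, Finset.sum_mul]
  exact Finset.sum_congr rfl fun a _ => by rw [Finset.sum_mul]

lemma sum_sum_ite_and (cc : ℂ) (a b : Fin 16) :
    ∑ d1 : Fin 16, ∑ d2 : Fin 16, (if d1 = a ∧ d2 = b then cc else 0) = cc := by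
  rw [Finset.sum_eq_single a
    (fun c _ hc => Finset.sum_eq_zero fun d _ => by simp [hc]) (by simp),
    Finset.sum_eq_single b (fun c _ hc => by simp [hc]) (by simp)]
  simp

lemma psd_smul {n : Type*} [Fintype n] {M : Matrix n n ℂ} (h : M.PosSemidef)
    {w : ℝ} (hw : 0 ≤ w) : ((w : ℂ) • M).PosSemidef := by
  refine posSemidef_iff_dotProduct_mulVec.mpr ⟨?_, ?_⟩
  · show ((w : ℂ) • M)ᴴ = _
    rw [conjTranspose_smul, h.1.eq]
    simp [Complex.star_def, Complex.conj_ofReal]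
  · intro x
    rw [smul_mulVec, dotProduct_smul, smul_eq_mul]
    exact mul_nonneg (by exact_mod_cast hw) (h.dotProduct_mulVec_nonneg x)

lemma psd_kron {m n : Type*} [Fintype m] [Fintype n] {A : Matrix m m ℂ}
    {B : Matrix n n ℂ} (hA : A.PosSemidef) (hB : B.PosSemidef) :
    (A ⊗ₖ B).PosSemidef := by
  exact hA.kronecker hB

lemma sep_psd {d p : Type*} [Fintype d] [Fintype p] {ρ : Matrix (d × p) (d × p) ℂ}
    (h : Separable ρ) : (ptD ρ).PosSemidef := by
  obtain ⟨n, w, A, B, hw, hA, hB, rfl⟩ := h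
  have hpt : ptD (∑ k, (w k : ℂ) • (A k ⊗ₖ B k))
      = ∑ k, (w k : ℂ) • ((A k)ᵀ ⊗ₖ B k) := by
    ext x y
    simp [ptD, Matrix.sum_apply, kroneckerMap_apply, Matrix.smul_apply]
  rw [hpt]
  refine Finset.sum_induction _ _ (fun a b ha hb => ha.add hb) .zero fun k _ => ?_
  exact psd_smul (psd_kron (hA k).transpose (hB k)) (hw k)

/-- For the [[6,4,2]] encoding (with `i ↦ (f i, g i)` a bijection onto the pairs of
Bell labels), the reduced state of the dealer and the first four player qubits has a
non-positive-semidefinite partial transpose with respect to `D`; hence, by the PPT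
criterion, it is entangled across the cut `D | {first four qubits}`. -/
theorem four_players_entangled (f g : Fin 16 → Fin 4)
    (hbij : Function.Bijective (fun i => (f i, g i))) :
    ¬ (ptD (ρred f g)).PosSemidef ∧ ¬ Separable (ρred f g) := by
  classical
  set e : Fin 16 ≃ Fin 4 × Fin 4 := Equiv.ofBijective _ hbij with he
  have happ : ∀ d, e d = (f d, g d) := fun d => rfl
  set i : Fin 16 := e.symm (0, 0) with hi
  set j : Fin 16 := e.symm (1, 1) with hj
  have hei : (f i, g i) = ((0 : Fin 4), (0 : Fin 4)) := by
    rw [← happ i, hi, e.apply_symm_apply]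
  have hej : (f j, g j) = ((1 : Fin 4), (1 : Fin 4)) := by
    rw [← happ j, hj, e.apply_symm_apply]
  have hfi : f i = 0 := by simpa using congrArg Prod.fst hei
  have hgi : g i = 0 := by simpa using congrArg Prod.snd hei
  have hfj : f j = 1 := by simpa using congrArg Prod.fst hej
  have hgj : g j = 1 := by simpa using congrArg Prod.snd hej
  have hij : i ≠ j := by
    intro h
    rw [h, hfj] at hfi
    exact absurd hfi (by decide)
  have huniq : ∀ (d : Fin 16) (a b : Fin 4), f d = a → g d = b → d = e.symm (a, b) := by
    intro d a b h1 h2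
    have hd : e d = (a, b) := by rw [happ, h1, h2]
    rw [← hd, e.symm_apply_apply]
  have hk11 : klein 1 1 = 0 := by decide
  have hk00 : klein 0 0 = 0 := by decide
  -- the entanglement witness
  set v : Fin 16 × ((Fin 2 × Fin 2) × (Fin 2 × Fin 2)) → ℂ := fun x =>
    (if x.1 = i then bellv 1 x.2.1 * bellv 1 x.2.2 else 0) -
    (if x.1 = j then bellv 0 x.2.1 * bellv 0 x.2.2 else 0) with hv
  have hvs : ∀ x, star (v x) = v x := by
    intro x
    simp only [hv, star_sub, apply_ite (star : ℂ → ℂ), star_mul', star_bellv, star_zero]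
  -- the key single-Bell-block sum
  have hS : ∀ (k : Fin 4) (d2 : Fin 16) (r : Fin 2 × Fin 2),
      (∑ p : (Fin 2 × Fin 2) × (Fin 2 × Fin 2),
        (bellv k p.1 * bellv k p.2) * Ψ6 f g (d2, (p.1, p.2, r)))
      = (if k = f d2 then 1 else 0) * (if k = g d2 then 1 else 0) *
          ((1 / 4 : ℂ) * bellv (klein (f d2) (g d2)) r) := by
    intro k d2 r
    rw [← bell_norm k (f d2), ← bell_norm k (g d2), ← sum_pair_mul]
    refine Finset.sum_congr rfl fun p _ => ?_
    simp only [Ψ6]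
    ring
  -- value of the collapsed inner sums
  have hF : ∀ (d1 d2 : Fin 16) (r : Fin 2 × Fin 2),
      (∑ p : (Fin 2 × Fin 2) × (Fin 2 × Fin 2),
        star (v (d1, p)) * Ψ6 f g (d2, (p.1, p.2, r)))
      = (if d1 = i ∧ d2 = j then (1 / 4 : ℂ) * bellv 0 r else 0) -
        (if d1 = j ∧ d2 = i then (1 / 4 : ℂ) * bellv 0 r else 0) := by
    intro d1 d2 r
    have expand : (∑ p : (Fin 2 × Fin 2) × (Fin 2 × Fin 2),
        star (v (d1, p)) * Ψ6 f g (d2, (p.1, p.2, r)))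
        = (if d1 = i then ∑ p : (Fin 2 × Fin 2) × (Fin 2 × Fin 2),
            (bellv 1 p.1 * bellv 1 p.2) * Ψ6 f g (d2, (p.1, p.2, r)) else 0)
          - (if d1 = j then ∑ p : (Fin 2 × Fin 2) × (Fin 2 × Fin 2),
            (bellv 0 p.1 * bellv 0 p.2) * Ψ6 f g (d2, (p.1, p.2, r)) else 0) := by
      simp only [hvs]
      simp only [hv]
      by_cases h1 : d1 = i <;> by_cases h2 : d1 = j
      · exact absurd (by rw [← h1, h2] : i = j) hij
      · simp [h1, h2, sub_mul, Finset.sum_sub_distrib]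
      · simp [h1, h2, sub_mul, Finset.sum_sub_distrib]
      · simp [h1, h2, sub_mul, Finset.sum_sub_distrib]
    rw [expand, hS, hS]
    by_cases hd2j : d2 = j
    · subst hd2j
      simp [hfj, hgj, hk11, Ne.symm hij, show (0 : Fin 4) ≠ 1 by decide]
    · by_cases hd2i : d2 = i
      · subst hd2i
        simp [hfi, hgi, hk00, hd2j, show (1 : Fin 4) ≠ 0 by decide]
      · have h1 : ¬((1 : Fin 4) = f d2 ∧ (1 : Fin 4) = g d2) := by
          rintro ⟨ha, hb⟩
          exact hd2j (by rw [huniq d2 1 1 ha.symm hb.symm, hj])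
        have h0 : ¬((0 : Fin 4) = f d2 ∧ (0 : Fin 4) = g d2) := by
          rintro ⟨ha, hb⟩
          exact hd2i (by rw [huniq d2 0 0 ha.symm hb.symm, hi])
        rcases not_and_or.mp h1 with h | h <;> rcases not_and_or.mp h0 with h' | h' <;>
          simp [h, h', hd2i, hd2j]
  -- the quadratic form of the witness
  have hQ : star v ⬝ᵥ (ptD (ρred f g)) *ᵥ v = -(1 / 8 : ℂ) := by
    have expand : star v ⬝ᵥ (ptD (ρred f g)) *ᵥ v
        = ∑ x : Fin 16 × ((Fin 2 × Fin 2) × (Fin 2 × Fin 2)), star (v x) *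
            ∑ y : Fin 16 × ((Fin 2 × Fin 2) × (Fin 2 × Fin 2)),
              (∑ r : Fin 2 × Fin 2,
                Ψ6 f g (y.1, (x.2.1, x.2.2, r)) * star (Ψ6 f g (x.1, (y.2.1, y.2.2, r)))) * v y := by
      simp [dotProduct, mulVec, ptD, ρred, Finset.mul_sum]
    rw [expand,
      key_swap v (fun d q r => Ψ6 f g (d, (q.1, q.2, r)))
        (fun d q r => star (Ψ6 f g (d, (q.1, q.2, r))))]
    have hG : ∀ (d1 d2 : Fin 16) (r : Fin 2 × Fin 2),
        (∑ p : (Fin 2 × Fin 2) × (Fin 2 × Fin 2),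
          star (Ψ6 f g (d1, (p.1, p.2, r))) * v (d2, p))
        = star (∑ p : (Fin 2 × Fin 2) × (Fin 2 × Fin 2),
            star (v (d2, p)) * Ψ6 f g (d1, (p.1, p.2, r))) := by
      intro d1 d2 r
      rw [star_sum]
      exact Finset.sum_congr rfl fun p _ => by rw [star_mul', star_star, mul_comm]
    simp only [hG, hF]
    have hsb : ∀ r : Fin 2 × Fin 2, star ((1 / 4 : ℂ) * bellv 0 r)
        = (1 / 4 : ℂ) * bellv 0 r := by
      intro r
      rw [star_mul', star_bellv]
      norm_num
    simp only [star_sub, apply_ite (star : ℂ → ℂ), star_zero, hsb]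
    have hprod : ∀ (r : Fin 2 × Fin 2) (d1 d2 : Fin 16),
        ((if d1 = i ∧ d2 = j then (1 / 4 : ℂ) * bellv 0 r else 0) -
         (if d1 = j ∧ d2 = i then (1 / 4 : ℂ) * bellv 0 r else 0)) *
        ((if d2 = i ∧ d1 = j then (1 / 4 : ℂ) * bellv 0 r else 0) -
         (if d2 = j ∧ d1 = i then (1 / 4 : ℂ) * bellv 0 r else 0))
        = -(if d1 = i ∧ d2 = j then (1 / 4 : ℂ) * bellv 0 r * ((1 / 4 : ℂ) * bellv 0 r) else 0)
          - (if d1 = j ∧ d2 = i then (1 / 4 : ℂ) * bellv 0 r * ((1 / 4 : ℂ) * bellv 0 r) else 0) := by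
      intro r d1 d2
      by_cases h1 : d1 = i <;> by_cases h2 : d1 = j <;>
        by_cases h3 : d2 = i <;> by_cases h4 : d2 = j <;>
        first
          | (exact absurd (by rw [← h1, h2]) hij)
          | (exact absurd (by rw [← h3, h4]) hij)
          | (simp [h1, h2, h3, h4, hij, Ne.symm hij]; try ring)
    have hcol : ∀ r : Fin 2 × Fin 2,
        (∑ d1 : Fin 16, ∑ d2 : Fin 16,
          ((if d1 = i ∧ d2 = j then (1 / 4 : ℂ) * bellv 0 r else 0) -
           (if d1 = j ∧ d2 = i then (1 / 4 : ℂ) * bellv 0 r else 0)) *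
          ((if d2 = i ∧ d1 = j then (1 / 4 : ℂ) * bellv 0 r else 0) -
           (if d2 = j ∧ d1 = i then (1 / 4 : ℂ) * bellv 0 r else 0)))
        = -(2 : ℂ) * ((1 / 4 : ℂ) * bellv 0 r * ((1 / 4 : ℂ) * bellv 0 r)) := by
      intro r
      simp only [hprod]
      simp only [Finset.sum_sub_distrib, Finset.sum_neg_distrib]
      rw [sum_sum_ite_and, sum_sum_ite_and]
      ring
    simp only [hcol]
    have hb := bell_norm 0 0
    rw [if_pos rfl] at hb
    have hsplit : (∑ r : Fin 2 × Fin 2,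
        -(2 : ℂ) * ((1 / 4 : ℂ) * bellv 0 r * ((1 / 4 : ℂ) * bellv 0 r)))
        = -(1 / 8 : ℂ) * ∑ r : Fin 2 × Fin 2, bellv 0 r * bellv 0 r := by
      rw [Finset.mul_sum]
      exact Finset.sum_congr rfl fun r _ => by ring
    rw [hsplit, hb]
    ring
  have hnps : ¬ (ptD (ρred f g)).PosSemidef := by
    intro h
    have h2 := h.dotProduct_mulVec_nonneg v
    rw [hQ] at h2
    rw [Complex.le_def] at h2
    norm_num at h2
  exact ⟨hnps, fun hs => hnps (sep_psd hs)⟩
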